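/- Let p be an odd prime. Then U^k(ℤ_{p^α}) is trivial if and only if α < k and U^{k-α+1}(ℤ_p) is trivial. -/
import Mathlib


/-- Cyclic factors of the group of units of `ZMod (p^a)` (Lemma int1). -/
noncomputable def pUnitsList (p a : ℕ) : List ℕ :=
  if p = 2 then (if 2 ≤ a then [2, 2 ^ (a - 2)] else [1]) else [p - 1, p ^ (a - 1)]

/-- Cyclic factors of `U(ZMod n)`, via the prime-power factorization of `n`. -/
noncomputable def unitsList (n : ℕ) : List ℕ :=
  (Nat.factorization n).support.toList.flatMap fun p => pUnitsList p (Nat.factorization n p)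

/-- One application of the units functor to a product of cyclic rings. -/
noncomputable def uStep (l : List ℕ) : List ℕ := l.flatMap unitsList

/-- Cyclic factors of the k-th iterated group of units `U^k(ZMod n)`. -/
noncomputable def UkList (k n : ℕ) : List ℕ := uStep^[k] [n]

/-- The k-th iterated group of units `U^k(ZMod n)`, as the product of its cyclic factors. -/
abbrev Uk (k n : ℕ) : Type := ∀ i : Fin (UkList k n).length, ZMod ((UkList k n).get i)

/-- `U^k(ZMod n)` is trivial. -/
def Ttriv (k n : ℕ) : Prop := ∀ m ∈ UkList k n, m = 1

lemma subsingleton_zmod_iff (m : ℕ) : Subsingleton (ZMod m) ↔ m = 1 := by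
  constructor
  · intro h
    by_contra hm
    rcases m with _ | _ | m
    · exact not_subsingleton ℤ h
    · exact hm rfl
    · haveI : Fact (1 < m + 2) := ⟨by omega⟩
      exact not_subsingleton (ZMod (m + 2)) h
  · rintro rfl; infer_instance

lemma uk_subsingleton_iff (k n : ℕ) : Subsingleton (Uk k n) ↔ Ttriv k n := by
  constructor
  · intro h m hm
    obtain ⟨i, hi⟩ := List.mem_iff_get.mp hm
    haveI : ∀ j : Fin (UkList k n).length, Nonempty (ZMod ((UkList k n).get j)) :=
      fun j => ⟨0⟩
    haveI := h
    have hs : Subsingleton (ZMod ((UkList k n).get i)) :=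
      (Function.surjective_eval (β := fun j => ZMod ((UkList k n).get j)) i).subsingleton
    rw [← hi]
    exact (subsingleton_zmod_iff _).mp hs
  · intro h
    constructor
    intro f g
    funext i
    haveI : Subsingleton (ZMod ((UkList k n).get i)) :=
      (subsingleton_zmod_iff _).mpr (h _ (List.mem_iff_get.mpr ⟨i, rfl⟩))
    exact Subsingleton.elim _ _

lemma uStep_append (l₁ l₂ : List ℕ) : uStep (l₁ ++ l₂) = uStep l₁ ++ uStep l₂ := by
  simp [uStep]

lemma uStep_iterate_append (k : ℕ) (l₁ l₂ : List ℕ) :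
    uStep^[k] (l₁ ++ l₂) = uStep^[k] l₁ ++ uStep^[k] l₂ := by
  induction k generalizing l₁ l₂ with
  | zero => simp
  | succ k ih => simp [Function.iterate_succ_apply, uStep_append, ih]

lemma uStep_iterate_eq_flatMap (k : ℕ) (l : List ℕ) :
    uStep^[k] l = l.flatMap (UkList k) := by
  induction l with
  | nil =>
    have : uStep [] = [] := by simp [uStep]
    simp [Function.iterate_fixed this]
  | cons a t ih =>
    have : a :: t = [a] ++ t := rfl
    rw [this, uStep_iterate_append, ih]
    simp [UkList]

lemma UkList_succ (k n : ℕ) :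
    UkList (k + 1) n = (unitsList n).flatMap (UkList k) := by
  have h1 : uStep [n] = unitsList n := by simp [uStep]
  rw [UkList, Function.iterate_succ_apply, h1, uStep_iterate_eq_flatMap]

lemma Ttriv_succ_iff (k n : ℕ) : Ttriv (k + 1) n ↔ ∀ m ∈ unitsList n, Ttriv k m := by
  simp only [Ttriv, UkList_succ, List.mem_flatMap]
  aesop

lemma unitsList_one : unitsList 1 = [] := by
  simp [unitsList]

lemma Ttriv_one (k : ℕ) : Ttriv k 1 := by
  induction k with
  | zero => intro m hm; simpa [UkList] using hm
  | succ k ih => rw [Ttriv_succ_iff]; simp [unitsList_one]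

lemma Ttriv_mono (k n : ℕ) (h : Ttriv k n) : Ttriv (k + 1) n := by
  induction k generalizing n with
  | zero =>
    have hn : n = 1 := h n (by simp [UkList])
    subst hn; exact Ttriv_one 1
  | succ k ih =>
    rw [Ttriv_succ_iff] at h ⊢
    exact fun m hm => ih m (h m hm)

lemma Ttriv_le_mono {k k' : ℕ} (n : ℕ) (hle : k ≤ k') (h : Ttriv k n) : Ttriv k' n := by
  induction hle with
  | refl => exact h
  | step _ ih => exact Ttriv_mono _ _ ih

lemma unitsList_prime_pow {p : ℕ} (hp : p.Prime) (hp2 : p ≠ 2) {a : ℕ} (ha : 1 ≤ a) :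
    unitsList (p ^ a) = [p - 1, p ^ (a - 1)] := by
  unfold unitsList
  rw [hp.factorization_pow, Finsupp.support_single_ne_zero _ (by omega)]
  simp [pUnitsList, hp2]

lemma Ttriv_prime_pow_succ {p : ℕ} (hp : p.Prime) (hp2 : p ≠ 2) {a : ℕ} (ha : 1 ≤ a)
    (k : ℕ) : Ttriv (k + 1) (p ^ a) ↔ Ttriv k (p - 1) ∧ Ttriv k (p ^ (a - 1)) := by
  rw [Ttriv_succ_iff]
  simp [unitsList_prime_pow hp hp2 ha]

lemma Ttriv_prime_succ {p : ℕ} (hp : p.Prime) (hp2 : p ≠ 2) (k : ℕ) :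
    Ttriv (k + 1) p ↔ Ttriv k (p - 1) := by
  have := Ttriv_prime_pow_succ hp hp2 (le_refl 1) k
  simp only [pow_one, pow_zero] at this
  rw [this]
  exact and_iff_left (Ttriv_one k)

lemma not_Ttriv_diag {p : ℕ} (hp : p.Prime) (hp2 : p ≠ 2) :
    ∀ α, 1 ≤ α → ¬ Ttriv α (p ^ α) := by
  intro α hα
  induction α, hα using Nat.le_induction with
  | base =>
    rw [pow_one, Ttriv_prime_succ hp hp2]
    intro h
    have := h (p - 1) (by simp [UkList])
    have := hp.two_le
    omega
  | succ α hα ih =>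
    rw [Ttriv_prime_pow_succ hp hp2 (by omega)]
    intro h
    exact ih (by simpa using h.2)

lemma Ttriv_shift {p : ℕ} (hp : p.Prime) (hp2 : p ≠ 2) :
    ∀ α, 1 ≤ α → ∀ j, (Ttriv (α + j) (p ^ α) ↔ Ttriv (j + 1) p) := by
  intro α hα
  induction α, hα using Nat.le_induction with
  | base =>
    intro j
    rw [pow_one, Nat.add_comm]
  | succ α hα ih =>
    intro j
    have heq : α + 1 + j = (α + j) + 1 := by omega
    rw [heq, Ttriv_prime_pow_succ hp hp2 (by omega)]
    simp only [Nat.add_sub_cancel]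
    rw [ih j]
    constructor
    · exact fun h => h.2
    · intro h
      refine ⟨?_, h⟩
      have h1 : Ttriv j (p - 1) := (Ttriv_prime_succ hp hp2 j).mp h
      exact Ttriv_le_mono _ (by omega) h1

theorem stmt_18 (p α k : ℕ) (hp : p.Prime) (hodd : Odd p) (hα : 1 ≤ α) (hk : 1 ≤ k) :
    Subsingleton (Uk k (p ^ α)) ↔ (α < k ∧ Subsingleton (Uk (k - α + 1) p)) := by
  have hp2 : p ≠ 2 := by
    rintro rfl
    exact (Nat.not_odd_iff_even.mpr even_two) hodd
  rw [uk_subsingleton_iff, uk_subsingleton_iff]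
  rcases le_or_gt k α with hle | hlt
  · constructor
    · intro h
      exact absurd (Ttriv_le_mono _ hle h) (not_Ttriv_diag hp hp2 α hα)
    · intro h
      omega
  · obtain ⟨j, rfl⟩ : ∃ j, k = α + j := ⟨k - α, by omega⟩
    have hj : 1 ≤ j := by omega
    have hkα : α + j - α + 1 = j + 1 := by omega
    rw [hkα, Ttriv_shift hp hp2 α hα j]
    exact (and_iff_right hlt).symm
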